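/- arXiv:1407.2472 — 3 statements merged into one kernel-verified Lean document; each statement's English description precedes it below -/
import Mathlib

section
/- Let m be Lebesgue measure on ℝ². Let Q_0 = [−1/2,1/2]² and Q_s = 3^s·Q_0 = [−3^s/2, 3^s/2]² for s ≥ 1. Define A_1 = Q_0, B_1 = Q_1, and for s ≥ 2: A_s = Q_{2s−2}∖Q_{2s−4}, B_s = Q_{2s−1}∖Q_{2s−3}. Then the atomic σ-algebras Σ_a = σ⟨A_s : s ≥ 1⟩ and Σ_b = σ⟨B_s : s ≥ 1⟩ form an admissible covering of (ℝ², m) (with distinguished atoms A_0 = B_0 = ∅, since m(ℝ²) = ∞). -/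
open MeasureTheory ENNReal

/-- An atomic σ-subalgebra of the ambient σ-algebra, encoded by the countable
measurable partition of `Ω` into atoms of positive finite measure generating it. -/
structure AtomicPartition {Ω : Type*} {m : MeasurableSpace Ω} (μ : Measure Ω) where
  ι : Type
  countable : Countable ι
  atom : ι → Set Ω
  measurableSet : ∀ i, MeasurableSet (atom i)
  disjoint : Pairwise (Function.onFun Disjoint atom)
  cover : ⋃ i, atom i = Set.univ
  pos : ∀ i, 0 < μ (atom i)
  lt_top : ∀ i, μ (atom i) < ∞

namespace AtomicPartition

variable {Ω : Type*} {m : MeasurableSpace Ω} {μ : Measure Ω}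

/-- The σ-algebra generated by the atoms. -/
def sigma (P : AtomicPartition μ) : MeasurableSpace Ω :=
  MeasurableSpace.generateFrom (Set.range P.atom)

/-- The conditional expectation onto the atomic σ-algebra:
`E f = ∑_A (μ(A)⁻¹ ∫_A f dμ) · 1_A`. -/
noncomputable def condExp (P : AtomicPartition μ) {E : Type*} [NormedAddCommGroup E]
    [NormedSpace ℝ E] (f : Ω → E) : Ω → E := fun x =>
  ∑' i, Set.indicator (P.atom i)
    (fun _ => (μ (P.atom i)).toReal⁻¹ • ∫ y in P.atom i, f y ∂μ) x

end AtomicPartition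

/-- `|R_B|`: the number (in `ℝ≥0∞`) of atoms of `Pa` meeting the atom `Pb.atom j`
in positive measure. -/
noncomputable def rCard {Ω : Type*} {m : MeasurableSpace Ω} (μ : Measure Ω)
    (Pa Pb : AtomicPartition μ) (j : Pb.ι) : ℝ≥0∞ :=
  ∑' _i : {i : Pa.ι // 0 < μ (Pa.atom i ∩ Pb.atom j)}, 1

/-- `∑_{B ∈ R_A} |R_B| · μ(A∩B)² / (μ(A)μ(B))` for the atom `A = Pa.atom i`
(terms with `μ(A∩B) = 0` vanish, so we may sum over all atoms of `Pb`). -/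
noncomputable def atomSum {Ω : Type*} {m : MeasurableSpace Ω} (μ : Measure Ω)
    (Pa Pb : AtomicPartition μ) (i : Pa.ι) : ℝ≥0∞ :=
  ∑' j : Pb.ι, rCard μ Pa Pb j * μ (Pa.atom i ∩ Pb.atom j) ^ 2 /
    (μ (Pa.atom i) * μ (Pb.atom j))

/-- `Σ_a ∩ Σ_b = {Ω, ∅}` modulo `μ`-null sets. -/
def TrivialIntersection {Ω : Type*} {m : MeasurableSpace Ω} (μ : Measure Ω)
    (ma mb : MeasurableSpace Ω) : Prop :=
  ∀ S T : Set Ω, MeasurableSet[ma] S → MeasurableSet[mb] T →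
    μ (symmDiff S T) = 0 → μ S = 0 ∨ μ Sᶜ = 0

/-- `(Σ_a, Σ_b)` is an admissible covering of `(Ω, Σ, μ)` with distinguished atoms
`A0, B0` (which are actual atoms when `μ` is finite, and `∅`, i.e. `none`, when
`μ(Ω) = ∞`). -/
structure IsAdmissibleCovering {Ω : Type*} {m : MeasurableSpace Ω} (μ : Measure Ω)
    (Pa Pb : AtomicPartition μ) (A0 : Option Pa.ι) (B0 : Option Pb.ι) : Prop where
  trivial_inter : TrivialIntersection μ Pa.sigma Pb.sigma
  infinite_case : μ Set.univ = ∞ → A0 = none ∧ B0 = none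
  finite_case : μ Set.univ < ∞ → A0.isSome ∧ B0.isSome
  small : min (⨆ i ∈ {i : Pa.ι | some i ≠ A0}, atomSum μ Pa Pb i)
      (⨆ j ∈ {j : Pb.ι | some j ≠ B0}, atomSum μ Pb Pa j) < 1

/-- The cube `Q_s = 3^s·[-1/2,1/2]²` in `ℝ²`. -/
def Q13 (s : ℕ) : Set (Fin 2 → ℝ) :=
  Set.Icc (fun _ => -((3 : ℝ) ^ s / 2)) fun _ => (3 : ℝ) ^ s / 2

/-- The corona atoms `A_1 = Q_0` and `A_s = Q_{2s-2} ∖ Q_{2s-4}` for `s ≥ 2`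
(reindexed so that `A13 k` is the paper's `A_{k+1}`). -/
def A13 : ℕ → Set (Fin 2 → ℝ)
  | 0 => Q13 0
  | k + 1 => Q13 (2 * (k + 1)) \ Q13 (2 * k)

/-- The corona atoms `B_1 = Q_1` and `B_s = Q_{2s-1} ∖ Q_{2s-3}` for `s ≥ 2`
(reindexed so that `B13 k` is the paper's `B_{k+1}`). -/
def B13 : ℕ → Set (Fin 2 → ℝ)
  | 0 => Q13 1
  | k + 1 => Q13 (2 * (k + 1) + 1) \ Q13 (2 * k + 1)

/-!
Every point `x` has a least index `N x` with `x ∈ Q_{N x}`, and `x ∈ A_i ↔ ⌈N x / 2⌉ = i`,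
`x ∈ B_j ↔ ⌊N x / 2⌋ = j`. So `A_i ∩ B_j` is the shell `{N = i + j}` when `i ∈ {j, j + 1}` and
is empty otherwise. Every `B_j` therefore meets exactly the two atoms `A_j` and `A_{j+1}`. These
overlaps chain all atoms of `Σ_a` together, and a set of `Σ_a` agreeing a.e. with a set of `Σ_b`
that contains one atom of a chain contains the next, so it is null or conull. As every shell
`{N = n}` has measure at least `(8/9) 9^n`, each ratio `m(A_i ∩ B_j)² / (m(A_i) m(B_j))` is at
most `9^{2(i+j)} / ((8/9)² 9^{2i} 9^{2j+1}) = 9/64 < 1/6`, and the sum for `A_i` is at most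
`2 · 2 · 1/6 = 2/3`.
-/

namespace AtomicPartition

variable {Ω : Type*} {m : MeasurableSpace Ω} {μ : Measure Ω}

def ofLevelSets {ι : Type} [Countable ι] (s : ι → Set Ω) (f : Ω → ι)
    (hs : ∀ i x, x ∈ s i ↔ f x = i) (hmeas : ∀ i, MeasurableSet (s i))
    (hpos : ∀ i, 0 < μ (s i)) (hfin : ∀ i, μ (s i) < ∞) : AtomicPartition μ where
  ι := ι
  countable := ‹_›
  atom := s
  measurableSet := hmeas
  disjoint i j hij := Set.disjoint_left.mpr fun x hi hj =>
    hij (((hs i x).mp hi).symm.trans ((hs j x).mp hj))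
  cover := Set.iUnion_eq_univ_iff.mpr fun x => ⟨f x, (hs _ x).mpr rfl⟩
  pos := hpos
  lt_top := hfin

theorem atom_subset_or_disjoint (P : AtomicPartition μ) {S : Set Ω}
    (hS : MeasurableSet[P.sigma] S) (i : P.ι) : P.atom i ⊆ S ∨ Disjoint (P.atom i) S := by
  induction S, hS using MeasurableSpace.generateFrom_induction with
  | hC t ht _ =>
    obtain ⟨j, rfl⟩ := ht
    rcases eq_or_ne i j with rfl | hij
    · exact Or.inl subset_rfl
    · exact Or.inr (P.disjoint hij)
  | empty => exact Or.inr (Set.disjoint_empty _)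
  | compl t _ ih =>
    exact ih.symm.imp Set.subset_compl_iff_disjoint_right.mpr
      Set.disjoint_compl_right_iff_subset.mpr
  | iUnion f _ ih =>
    by_cases h : ∃ n, P.atom i ⊆ f n
    · obtain ⟨n, hn⟩ := h
      exact Or.inl (hn.trans (Set.subset_iUnion f n))
    · push Not at h
      exact Or.inr (Set.disjoint_iUnion_right.mpr fun n => (ih n).resolve_left (h n))

def Linked (Pa Pb : AtomicPartition μ) (i i' : Pa.ι) : Prop :=
  ∃ j, 0 < μ (Pa.atom i ∩ Pb.atom j) ∧ 0 < μ (Pa.atom i' ∩ Pb.atom j)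

theorem atom_subset_of_linked {Pa Pb : AtomicPartition μ} {S T : Set Ω}
    (hS : MeasurableSet[Pa.sigma] S) (hT : MeasurableSet[Pb.sigma] T) (hST : μ (symmDiff S T) = 0)
    {i i' : Pa.ι} (hii' : Linked Pa Pb i i') (hi : Pa.atom i ⊆ S) : Pa.atom i' ⊆ S := by
  obtain ⟨j, hij, hi'j⟩ := hii'
  have hjT : Pb.atom j ⊆ T := by
    refine (Pb.atom_subset_or_disjoint hT j).resolve_right fun hdisj => hij.ne' ?_
    refine measure_mono_null (fun x hx => Or.inl ⟨hi hx.1, ?_⟩) hST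
    exact Set.disjoint_left.mp hdisj hx.2
  refine (Pa.atom_subset_or_disjoint hS i').resolve_right fun hdisj => hi'j.ne' ?_
  refine measure_mono_null (fun x hx => Or.inr ⟨hjT hx.2, ?_⟩) hST
  exact Set.disjoint_left.mp hdisj hx.1

theorem trivialIntersection_of_linked (Pa Pb : AtomicPartition μ) (i₀ : Pa.ι)
    (hlink : ∀ i, Relation.ReflTransGen (Linked Pa Pb) i₀ i) :
    TrivialIntersection μ Pa.sigma Pb.sigma := by
  have eq_univ : ∀ S T, MeasurableSet[Pa.sigma] S → MeasurableSet[Pb.sigma] T →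
      μ (symmDiff S T) = 0 → Pa.atom i₀ ⊆ S → S = Set.univ := by
    intro S T hS hT hST h₀
    refine Set.univ_subset_iff.mp (Pa.cover ▸ Set.iUnion_subset fun i => ?_)
    induction hlink i with
    | refl => exact h₀
    | tail _ hlinked ih => exact atom_subset_of_linked hS hT hST hlinked ih
  intro S T hS hT hST
  rcases Pa.atom_subset_or_disjoint hS i₀ with h₀ | h₀
  · simp [eq_univ S T hS hT hST h₀]
  · have hSc := eq_univ Sᶜ Tᶜ hS.compl hT.compl (by rwa [compl_symmDiff_compl])
      (Set.subset_compl_iff_disjoint_right.mpr h₀)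
    simp [Set.compl_univ_iff.mp hSc]

end AtomicPartition

theorem ENNReal.sq_div_mul_le_ofReal {c a b : ℝ≥0∞} {γ α β q : ℝ} (hγ : 0 ≤ γ) (hα : 0 < α)
    (hβ : 0 < β) (hc : c ≤ ENNReal.ofReal γ) (ha : ENNReal.ofReal α ≤ a)
    (hb : ENNReal.ofReal β ≤ b) (h : γ ^ 2 ≤ q * (α * β)) :
    c ^ 2 / (a * b) ≤ ENNReal.ofReal q := calc
  c ^ 2 / (a * b) ≤ ENNReal.ofReal γ ^ 2 / (ENNReal.ofReal α * ENNReal.ofReal β) := by gcongr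
  _ = ENNReal.ofReal (γ ^ 2 / (α * β)) := by
    rw [ENNReal.ofReal_div_of_pos (by positivity), ENNReal.ofReal_pow hγ, ENNReal.ofReal_mul hα.le]
  _ ≤ ENNReal.ofReal q := ENNReal.ofReal_le_ofReal ((div_le_iff₀ (by positivity)).mpr h)

theorem mem_Q13_iff {s : ℕ} {x : Fin 2 → ℝ} : x ∈ Q13 s ↔ ‖x‖ ≤ 3 ^ s / 2 := by
  simp only [Q13, Set.mem_Icc, pi_norm_le_iff_of_nonneg (by positivity : (0 : ℝ) ≤ 3 ^ s / 2),
    Real.norm_eq_abs, abs_le, Pi.le_def, forall_and]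

theorem Q13_mono : Monotone Q13 := fun s t hst x hx =>
  mem_Q13_iff.mpr <| (mem_Q13_iff.mp hx).trans <| by gcongr; norm_num

theorem measurableSet_Q13 (s : ℕ) : MeasurableSet (Q13 s) := measurableSet_Icc

theorem volume_Q13 (s : ℕ) : volume (Q13 s) = ENNReal.ofReal (9 ^ s) := by
  rw [Q13, Real.volume_Icc_pi, Finset.prod_const, sub_neg_eq_add, add_halves, Finset.card_univ,
    Fintype.card_fin, ← ENNReal.ofReal_pow (by positivity), ← pow_mul, mul_comm, pow_mul]
  norm_num

theorem volume_Q13_lt_top (s : ℕ) : volume (Q13 s) < ∞ := by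
  simp [volume_Q13]

theorem exists_mem_Q13 (x : Fin 2 → ℝ) : ∃ s, x ∈ Q13 s := by
  obtain ⟨s, hs⟩ := pow_unbounded_of_one_lt (2 * ‖x‖) (by norm_num : (1 : ℝ) < 3)
  exact ⟨s, mem_Q13_iff.mpr (by linarith)⟩

open Classical in
noncomputable def cubeIndex (x : Fin 2 → ℝ) : ℕ := Nat.find (exists_mem_Q13 x)

open Classical in
theorem mem_Q13_iff_cubeIndex_le {s : ℕ} {x : Fin 2 → ℝ} : x ∈ Q13 s ↔ cubeIndex x ≤ s :=
  ⟨fun hx => Nat.find_min' _ hx, fun hs => Q13_mono hs (Nat.find_spec (exists_mem_Q13 x))⟩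

theorem ofReal_le_volume_cubeIndex_eq (n : ℕ) :
    ENNReal.ofReal (8 / 9 * 9 ^ n) ≤ volume {x | cubeIndex x = n} := by
  cases n with
  | zero =>
    have hQ : {x | cubeIndex x = 0} = Q13 0 := by
      ext x; simp [mem_Q13_iff_cubeIndex_le]
    rw [hQ, volume_Q13]
    exact ENNReal.ofReal_le_ofReal (by norm_num)
  | succ n =>
    have hQ : {x | cubeIndex x = n + 1} = Q13 (n + 1) \ Q13 n := by
      ext x; simp only [Set.mem_ofPred_eq, Set.mem_sdiff, mem_Q13_iff_cubeIndex_le]; omega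
    rw [hQ, measure_sdiff (Q13_mono n.le_succ) (measurableSet_Q13 n).nullMeasurableSet
      (by simp [volume_Q13]), volume_Q13, volume_Q13, ← ENNReal.ofReal_sub _ (by positivity)]
    exact ENNReal.ofReal_le_ofReal (by rw [pow_succ]; linarith)

theorem volume_cubeIndex_eq_pos (n : ℕ) : 0 < volume {x | cubeIndex x = n} :=
  (ENNReal.ofReal_pos.mpr (by positivity)).trans_le (ofReal_le_volume_cubeIndex_eq n)

theorem mem_A13_iff {i : ℕ} {x : Fin 2 → ℝ} : x ∈ A13 i ↔ (cubeIndex x + 1) / 2 = i := by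
  cases i <;> simp only [A13, Set.mem_sdiff, mem_Q13_iff_cubeIndex_le] <;> omega

theorem mem_B13_iff {j : ℕ} {x : Fin 2 → ℝ} : x ∈ B13 j ↔ cubeIndex x / 2 = j := by
  cases j <;> simp only [B13, Set.mem_sdiff, mem_Q13_iff_cubeIndex_le] <;> omega

theorem mem_A13_inter_B13 {i j : ℕ} {x : Fin 2 → ℝ} :
    x ∈ A13 i ∩ B13 j ↔ cubeIndex x = i + j ∧ (i = j ∨ i = j + 1) := by
  rw [Set.mem_inter_iff, mem_A13_iff, mem_B13_iff]
  omega

theorem measurableSet_A13 : ∀ i, MeasurableSet (A13 i)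
  | 0 => measurableSet_Q13 0
  | _ + 1 => (measurableSet_Q13 _).diff (measurableSet_Q13 _)

theorem measurableSet_B13 : ∀ j, MeasurableSet (B13 j)
  | 0 => measurableSet_Q13 1
  | _ + 1 => (measurableSet_Q13 _).diff (measurableSet_Q13 _)

theorem A13_subset_Q13 (i : ℕ) : A13 i ⊆ Q13 (2 * i) := fun x hx =>
  mem_Q13_iff_cubeIndex_le.mpr (by have := mem_A13_iff.mp hx; omega)

theorem B13_subset_Q13 (j : ℕ) : B13 j ⊆ Q13 (2 * j + 1) := fun x hx =>
  mem_Q13_iff_cubeIndex_le.mpr (by have := mem_B13_iff.mp hx; omega)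

theorem ofReal_le_volume_A13 (i : ℕ) : ENNReal.ofReal (8 / 9 * 9 ^ (2 * i)) ≤ volume (A13 i) :=
  (ofReal_le_volume_cubeIndex_eq _).trans <| measure_mono fun x hx =>
    mem_A13_iff.mpr (by rw [Set.mem_ofPred_eq] at hx; omega)

theorem ofReal_le_volume_B13 (j : ℕ) :
    ENNReal.ofReal (8 / 9 * 9 ^ (2 * j + 1)) ≤ volume (B13 j) :=
  (ofReal_le_volume_cubeIndex_eq _).trans <| measure_mono fun x hx =>
    mem_B13_iff.mpr (by rw [Set.mem_ofPred_eq] at hx; omega)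

noncomputable def partitionA : AtomicPartition (volume : Measure (Fin 2 → ℝ)) :=
  .ofLevelSets A13 (fun x => (cubeIndex x + 1) / 2) (fun _ _ => mem_A13_iff) measurableSet_A13
    (fun i => (ENNReal.ofReal_pos.mpr (by positivity)).trans_le (ofReal_le_volume_A13 i))
    (fun i => (measure_mono (A13_subset_Q13 i)).trans_lt (volume_Q13_lt_top _))

noncomputable def partitionB : AtomicPartition (volume : Measure (Fin 2 → ℝ)) :=
  .ofLevelSets B13 (fun x => cubeIndex x / 2) (fun _ _ => mem_B13_iff) measurableSet_B13
    (fun j => (ENNReal.ofReal_pos.mpr (by positivity)).trans_le (ofReal_le_volume_B13 j))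
    (fun j => (measure_mono (B13_subset_Q13 j)).trans_lt (volume_Q13_lt_top _))

theorem volume_A13_inter_B13_pos_iff {i j : ℕ} :
    0 < volume (A13 i ∩ B13 j) ↔ i = j ∨ i = j + 1 := by
  refine ⟨fun hpos => by_contra fun h => hpos.ne' ?_, fun h => ?_⟩
  · rw [Set.eq_empty_of_forall_notMem fun x hx => h (mem_A13_inter_B13.mp hx).2, measure_empty]
  · exact (volume_cubeIndex_eq_pos (i + j)).trans_le
      (measure_mono fun x hx => mem_A13_inter_B13.mpr ⟨hx, h⟩)

theorem volume_A13_inter_B13_le (i j : ℕ) :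
    volume (A13 i ∩ B13 j) ≤ ENNReal.ofReal (9 ^ (i + j)) :=
  volume_Q13 (i + j) ▸ measure_mono fun _ hx =>
    mem_Q13_iff_cubeIndex_le.mpr (mem_A13_inter_B13.mp hx).1.le

theorem linked_partitionA_succ (i : ℕ) : AtomicPartition.Linked partitionA partitionB i (i + 1) :=
  ⟨i, volume_A13_inter_B13_pos_iff.mpr (Or.inl rfl),
    volume_A13_inter_B13_pos_iff.mpr (Or.inr rfl)⟩

theorem rCard_partitionA_partitionB (j : ℕ) : rCard volume partitionA partitionB j = 2 := by
  have hR : {i : ℕ | 0 < volume (A13 i ∩ B13 j)} = ↑({j, j + 1} : Finset ℕ) := by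
    ext i
    simp [volume_A13_inter_B13_pos_iff]
  change ∑' _ : ({i : ℕ | 0 < volume (A13 i ∩ B13 j)} : Set ℕ), (1 : ℝ≥0∞) = 2
  rw [hR]
  refine (Finset.tsum_subtype {j, j + 1} fun _ => (1 : ℝ≥0∞)).trans ?_
  rw [Finset.sum_const, Finset.card_pair j.succ_ne_self.symm]
  simp

theorem volume_A13_inter_B13_sq_div_le (i j : ℕ) :
    volume (A13 i ∩ B13 j) ^ 2 / (volume (A13 i) * volume (B13 j)) ≤ ENNReal.ofReal (1 / 6) := by
  refine ENNReal.sq_div_mul_le_ofReal (by positivity) (by positivity) (by positivity)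
    (volume_A13_inter_B13_le i j) (ofReal_le_volume_A13 i) (ofReal_le_volume_B13 j) ?_
  have hscale :
      8 / 9 * (9 : ℝ) ^ (2 * i) * (8 / 9 * 9 ^ (2 * j + 1)) = 64 / 9 * (9 ^ (i + j)) ^ 2 := by
    ring
  rw [hscale]
  nlinarith [sq_nonneg ((9 : ℝ) ^ (i + j))]

theorem atomSum_partitionA_le (i : ℕ) :
    atomSum volume partitionA partitionB i ≤ ENNReal.ofReal (2 / 3) := by
  set term := fun j : ℕ => rCard volume partitionA partitionB j * volume (A13 i ∩ B13 j) ^ 2 /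
    (volume (A13 i) * volume (B13 j))
  -- at `i = 0` the truncated `i - 1` makes this finset `{0}`, which is still the right support
  have hzero : ∀ j ∉ ({i - 1, i} : Finset ℕ), term j = 0 := by
    intro j hj
    have hnull : volume (A13 i ∩ B13 j) = 0 := by
      rw [← nonpos_iff_eq_zero, ← not_lt, volume_A13_inter_B13_pos_iff]
      simp only [Finset.mem_insert, Finset.mem_singleton] at hj
      omega
    simp [term, hnull]
  have hle : ∀ j, term j ≤ ENNReal.ofReal (1 / 3) := fun j => calc
    term j = 2 * (volume (A13 i ∩ B13 j) ^ 2 / (volume (A13 i) * volume (B13 j))) := by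
      rw [← mul_div_assoc, ← rCard_partitionA_partitionB j]
    _ ≤ 2 * ENNReal.ofReal (1 / 6) := by gcongr; exact volume_A13_inter_B13_sq_div_le i j
    _ = ENNReal.ofReal (1 / 3) := by
      rw [← ENNReal.ofReal_ofNat, ← ENNReal.ofReal_mul (by norm_num)]
      norm_num
  calc atomSum volume partitionA partitionB i = ∑ j ∈ {i - 1, i}, term j := tsum_eq_sum hzero
    _ ≤ ({i - 1, i} : Finset ℕ).card • ENNReal.ofReal (1 / 3) :=
      Finset.sum_le_card_nsmul _ _ _ fun j _ => hle j
    _ ≤ 2 • ENNReal.ofReal (1 / 3) := by gcongr; exact Finset.card_le_two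
    _ = ENNReal.ofReal (2 / 3) := by
      rw [two_nsmul, ← ENNReal.ofReal_add (by norm_num) (by norm_num)]; norm_num

/-- The corona decompositions `(A_s)_{s≥1}` and `(B_s)_{s≥1}` of `ℝ²`
built from the cubes `Q_s = 3^s Q_0` generate atomic σ-algebras forming an admissible
covering of `(ℝ², m)` with distinguished atoms `A₀ = B₀ = ∅`. -/
theorem statement13 :
    ∃ Pa Pb : AtomicPartition (volume : Measure (Fin 2 → ℝ)),
      Set.range Pa.atom = Set.range A13 ∧ Set.range Pb.atom = Set.range B13 ∧
      IsAdmissibleCovering volume Pa Pb none none := by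
  refine ⟨partitionA, partitionB, rfl, rfl, ⟨?_, fun _ => ⟨rfl, rfl⟩, fun h => ?_, ?_⟩⟩
  · refine partitionA.trivialIntersection_of_linked partitionB (0 : ℕ) fun i => ?_
    induction i with
    | zero => exact .refl
    | succ i ih => exact ih.tail (linked_partitionA_succ i)
  · simp at h
  · refine min_lt_of_left_lt ((iSup₂_le fun i _ => atomSum_partitionA_le i).trans_lt ?_)
    exact ENNReal.ofReal_lt_one.mpr (by norm_num)
end

section
/- Let (Ω,Σ,μ) be a σ-finite measure space, Σ_a and Σ_b atomic σ-subalgebras of Σ with atom families Π_a, Π_b, let A_0 be either an element of Π_a or the empty set, and let 0 < c < 1. Assume that for every A ∈ Π_a∖{A_0}: Σ_{B∈R_A} |R_B|·μ(A∩B)²/(μ(A)μ(B)) ≤ c. Then for every finite subfamily 𝒜 ⊆ Π_a∖{A_0}, writing R_𝒜 = ⋃_{A∈𝒜} ⋃_{B∈R_A} B, one has μ(⋃_{A∈𝒜} A) ≤ c·μ(R_𝒜). -/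
/-!
Write `E = ⋃ 𝒜` and `S_B = μ(E ∩ B)` for the atoms `B` of `Σ_b`, so that `μ(E) = ∑_B S_B` with
`S_B ≠ 0` exactly for `B ∈ R_𝒜`. Sedrakyan's form of Cauchy–Schwarz gives
`μ(E)² ≤ μ(R_𝒜) · ∑_B S_B² / μ(B)`, and Cauchy–Schwarz over the at most `|R_B|` atoms of `𝒜`
meeting `B` gives `S_B² ≤ |R_B| ∑_{A ∈ 𝒜} μ(A ∩ B)²`. Exchanging the sums,
`∑_B S_B² / μ(B) ≤ ∑_{A ∈ 𝒜} μ(A) · atomSum(A) ≤ c · μ(E)`, and it remains to divide by `μ(E)`.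
-/

open MeasureTheory ENNReal

namespace ENNReal

variable {ι : Type*}

theorem tsum_mul_sq_le (f g : ι → ℝ≥0∞) :
    (∑' i, f i * g i) ^ 2 ≤ (∑' i, f i ^ 2) * ∑' i, g i ^ 2 := by
  let _ : MeasurableSpace ι := ⊤
  have hpow : ∀ x : ℝ≥0∞, x ^ (2 : ℝ) = x ^ 2 := fun x => rpow_ofNat x 2
  have holder := lintegral_mul_le_Lp_mul_Lq Measure.count Real.HolderConjugate.two_two
    measurable_from_top.aemeasurable measurable_from_top.aemeasurable (f := f) (g := g)
  simp only [Pi.mul_apply, lintegral_count, hpow] at holder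
  calc (∑' i, f i * g i) ^ 2
      ≤ ((∑' i, f i ^ 2) ^ (1 / 2 : ℝ) * (∑' i, g i ^ 2) ^ (1 / 2 : ℝ)) ^ 2 := by gcongr
    _ = (∑' i, f i ^ 2) * ∑' i, g i ^ 2 := by
        rw [mul_pow, ← rpow_natCast, ← rpow_natCast, ← rpow_mul, ← rpow_mul]
        norm_num

theorem sq_sum_le_card_mul_sum_sq (s : Finset ι) (f : ι → ℝ≥0∞) :
    (∑ i ∈ s, f i) ^ 2 ≤ s.card * ∑ i ∈ s, f i ^ 2 := by
  have := tsum_mul_sq_le (fun i : s => f i) 1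
  simp only [Pi.one_apply, mul_one, one_pow] at this
  rwa [Finset.tsum_subtype s f, Finset.tsum_subtype s (fun i => f i ^ 2),
    Finset.tsum_subtype s (fun _ => 1), Finset.sum_const, nsmul_one, mul_comm] at this

theorem sq_tsum_le_tsum_mul_tsum_sq_div (f : ι → ℝ≥0∞) {g : ι → ℝ≥0∞}
    (hg0 : ∀ i, g i ≠ 0) (hg : ∀ i, g i ≠ ∞) :
    (∑' i, f i) ^ 2 ≤ (∑' i, g i) * ∑' i, f i ^ 2 / g i := by
  set r : ι → ℝ≥0∞ := fun i => g i ^ (1 / 2 : ℝ)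
  have hr_sq : ∀ i, r i ^ 2 = g i := fun i => by
    rw [← rpow_natCast, ← rpow_mul]
    norm_num
  have hr0 : ∀ i, r i ≠ 0 := fun i => (rpow_pos (pos_iff_ne_zero.2 (hg0 i)) (hg i)).ne'
  have hr : ∀ i, r i ≠ ∞ := fun i => rpow_ne_top_of_nonneg (by norm_num) (hg i)
  have := tsum_mul_sq_le r (fun i => f i / r i)
  simp only [ENNReal.mul_div_cancel (hr0 _) (hr _)] at this
  simpa only [div_eq_mul_inv, mul_pow, ← ENNReal.inv_pow, hr_sq] using this

end ENNReal

namespace AtomicPartition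

variable {Ω : Type*} {m : MeasurableSpace Ω} {μ : Measure Ω}

instance instCountableι (P : AtomicPartition μ) : Countable P.ι := P.countable

theorem measure_biUnion_finset_atom (P : AtomicPartition μ) (s : Finset P.ι) :
    μ (⋃ i ∈ s, P.atom i) = ∑ i ∈ s, μ (P.atom i) :=
  measure_biUnion_finset (fun _ _ _ _ h => P.disjoint h) fun i _ => P.measurableSet i

theorem measure_biUnion_finset_atom_inter (P : AtomicPartition μ)
    (s : Finset P.ι) {t : Set Ω} (ht : MeasurableSet t) :
    μ ((⋃ i ∈ s, P.atom i) ∩ t) = ∑ i ∈ s, μ (P.atom i ∩ t) := by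
  rw [Set.iUnion₂_inter]
  exact measure_biUnion_finset
    (fun _ _ _ _ h => (P.disjoint h).mono Set.inter_subset_left Set.inter_subset_left)
    fun i _ => (P.measurableSet i).inter ht

theorem measure_biUnion_atom (P : AtomicPartition μ) (s : Set P.ι) :
    μ (⋃ i ∈ s, P.atom i) = ∑' i : s, μ (P.atom i) :=
  measure_biUnion s.to_countable (fun _ _ _ _ h => P.disjoint h) fun i _ => P.measurableSet i

theorem measure_eq_tsum_inter_atom (P : AtomicPartition μ) {s : Set Ω} (hs : MeasurableSet s) :
    μ s = ∑' i, μ (s ∩ P.atom i) := by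
  conv_lhs => rw [← Set.inter_univ s, ← P.cover, Set.inter_iUnion]
  exact measure_iUnion
    (fun _ _ h => (P.disjoint h).mono Set.inter_subset_right Set.inter_subset_right)
    fun i => hs.inter (P.measurableSet i)

end AtomicPartition

section

variable {Ω : Type*} {m : MeasurableSpace Ω} {μ : Measure Ω} (Pa Pb : AtomicPartition μ)

theorem card_filter_le_rCard (s : Finset Pa.ι) (j : Pb.ι) :
    ((s.filter fun i => 0 < μ (Pa.atom i ∩ Pb.atom j)).card : ℝ≥0∞) ≤ rCard μ Pa Pb j := by
  rw [← Finset.card_subtype, ← nsmul_one, ← Finset.sum_const, rCard]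
  exact ENNReal.sum_le_tsum _

theorem sq_measure_biUnion_inter_atom_le (s : Finset Pa.ι) (j : Pb.ι) :
    μ ((⋃ i ∈ s, Pa.atom i) ∩ Pb.atom j) ^ 2
      ≤ rCard μ Pa Pb j * ∑ i ∈ s, μ (Pa.atom i ∩ Pb.atom j) ^ 2 := by
  set t := s.filter fun i => 0 < μ (Pa.atom i ∩ Pb.atom j)
  have hsum : μ ((⋃ i ∈ s, Pa.atom i) ∩ Pb.atom j) = ∑ i ∈ t, μ (Pa.atom i ∩ Pb.atom j) := by
    rw [Pa.measure_biUnion_finset_atom_inter s (Pb.measurableSet j)]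
    exact (Finset.sum_filter_of_ne fun i _ h => pos_iff_ne_zero.2 h).symm
  calc μ ((⋃ i ∈ s, Pa.atom i) ∩ Pb.atom j) ^ 2
      ≤ t.card * ∑ i ∈ t, μ (Pa.atom i ∩ Pb.atom j) ^ 2 := by
        rw [hsum]
        exact ENNReal.sq_sum_le_card_mul_sum_sq t _
    _ ≤ rCard μ Pa Pb j * ∑ i ∈ s, μ (Pa.atom i ∩ Pb.atom j) ^ 2 := by
        gcongr
        · exact card_filter_le_rCard Pa Pb s j
        · exact Finset.filter_subset _ s

theorem measure_mul_atomSum (i : Pa.ι) :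
    μ (Pa.atom i) * atomSum μ Pa Pb i
      = ∑' j, rCard μ Pa Pb j * μ (Pa.atom i ∩ Pb.atom j) ^ 2 / μ (Pb.atom j) := by
  rw [atomSum, ← ENNReal.tsum_mul_left]
  refine tsum_congr fun j => ?_
  rw [← mul_div_assoc, ENNReal.mul_div_mul_left _ _ (Pa.pos i).ne' (Pa.lt_top i).ne]

theorem tsum_sq_measure_biUnion_inter_atom_div_le (s : Finset Pa.ι) {c : ℝ≥0∞}
    (H : ∀ i ∈ s, atomSum μ Pa Pb i ≤ c) :
    ∑' j, μ ((⋃ i ∈ s, Pa.atom i) ∩ Pb.atom j) ^ 2 / μ (Pb.atom j)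
      ≤ c * μ (⋃ i ∈ s, Pa.atom i) :=
  calc ∑' j, μ ((⋃ i ∈ s, Pa.atom i) ∩ Pb.atom j) ^ 2 / μ (Pb.atom j)
      ≤ ∑' j, (rCard μ Pa Pb j * ∑ i ∈ s, μ (Pa.atom i ∩ Pb.atom j) ^ 2) / μ (Pb.atom j) :=
        ENNReal.tsum_le_tsum fun j => by gcongr; exact sq_measure_biUnion_inter_atom_le Pa Pb s j
    _ = ∑ i ∈ s, ∑' j, rCard μ Pa Pb j * μ (Pa.atom i ∩ Pb.atom j) ^ 2 / μ (Pb.atom j) := by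
        simp_rw [div_eq_mul_inv, Finset.mul_sum, Finset.sum_mul]
        exact Summable.tsum_finsetSum fun _ _ => ENNReal.summable
    _ = ∑ i ∈ s, μ (Pa.atom i) * atomSum μ Pa Pb i :=
        Finset.sum_congr rfl fun i _ => (measure_mul_atomSum Pa Pb i).symm
    _ ≤ ∑ i ∈ s, μ (Pa.atom i) * c := by
        gcongr with i hi
        exact H i hi
    _ = c * μ (⋃ i ∈ s, Pa.atom i) := by
        rw [← Finset.sum_mul, Pa.measure_biUnion_finset_atom, mul_comm]

theorem measure_biUnion_atom_le_mul (s : Finset Pa.ι) {c : ℝ≥0∞}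
    (H : ∀ i ∈ s, atomSum μ Pa Pb i ≤ c) :
    μ (⋃ i ∈ s, Pa.atom i)
      ≤ c * μ (⋃ j ∈ {j | μ ((⋃ i ∈ s, Pa.atom i) ∩ Pb.atom j) ≠ 0}, Pb.atom j) := by
  set E := ⋃ i ∈ s, Pa.atom i
  set R := {j | μ (E ∩ Pb.atom j) ≠ 0}
  have hE : MeasurableSet E := Finset.measurableSet_biUnion s fun i _ => Pa.measurableSet i
  have hE_top : μ E ≠ ∞ := by
    rw [Pa.measure_biUnion_finset_atom]
    exact ENNReal.sum_ne_top.2 fun i _ => (Pa.lt_top i).ne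
  rcases eq_or_ne (μ E) 0 with hE0 | hE0
  · simp [hE0]
  have hER : μ E = ∑' j : R, μ (E ∩ Pb.atom j) := by
    rw [Pb.measure_eq_tsum_inter_atom hE]
    exact (tsum_subtype_eq_of_support_subset fun j hj => hj).symm
  have key : μ E * μ E ≤ c * μ (⋃ j ∈ R, Pb.atom j) * μ E :=
    calc μ E * μ E = (∑' j : R, μ (E ∩ Pb.atom j)) ^ 2 := by rw [← hER, sq]
      _ ≤ (∑' j : R, μ (Pb.atom j)) * ∑' j : R, μ (E ∩ Pb.atom j) ^ 2 / μ (Pb.atom j) :=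
        ENNReal.sq_tsum_le_tsum_mul_tsum_sq_div _ (fun j => (Pb.pos j).ne')
          fun j => (Pb.lt_top j).ne
      _ ≤ μ (⋃ j ∈ R, Pb.atom j) * (c * μ E) := by
        rw [Pb.measure_biUnion_atom]
        gcongr
        exact (ENNReal.tsum_comp_le_tsum_of_injective Subtype.val_injective _).trans
          (tsum_sq_measure_biUnion_inter_atom_div_le Pa Pb s H)
      _ = c * μ (⋃ j ∈ R, Pb.atom j) * μ E := by ring
  exact (ENNReal.mul_le_mul_iff_left hE0 hE_top).1 key

theorem biUnion_atom_measure_inter_pos_eq (s : Finset Pa.ι) :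
    ⋃ i ∈ s, ⋃ j ∈ {j | 0 < μ (Pa.atom i ∩ Pb.atom j)}, Pb.atom j
      = ⋃ j ∈ {j | μ ((⋃ i ∈ s, Pa.atom i) ∩ Pb.atom j) ≠ 0}, Pb.atom j := by
  have hne : ∀ j, μ ((⋃ i ∈ s, Pa.atom i) ∩ Pb.atom j) ≠ 0 ↔
      ∃ i ∈ s, 0 < μ (Pa.atom i ∩ Pb.atom j) := fun j => by
    simp [Set.iUnion₂_inter, measure_iUnion_null_iff, pos_iff_ne_zero]
  ext x
  simp only [Set.mem_iUnion, Set.mem_ofPred_eq, exists_prop, hne]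
  tauto

end

theorem statement18_general {Ω : Type*} [MeasurableSpace Ω] (μ : Measure Ω)
    (Pa Pb : AtomicPartition μ) (A0 : Option Pa.ι) (c : ℝ)
    (H : ∀ i : Pa.ι, some i ≠ A0 → atomSum μ Pa Pb i ≤ ENNReal.ofReal c) :
    ∀ 𝒜 : Finset Pa.ι, (∀ i ∈ 𝒜, some i ≠ A0) →
      μ (⋃ i ∈ 𝒜, Pa.atom i)
        ≤ ENNReal.ofReal c *
          μ (⋃ i ∈ 𝒜, ⋃ j ∈ {j : Pb.ι | 0 < μ (Pa.atom i ∩ Pb.atom j)}, Pb.atom j) := by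
  intro 𝒜 h𝒜
  rw [biUnion_atom_measure_inter_pos_eq]
  exact measure_biUnion_atom_le_mul Pa Pb 𝒜 fun i hi => H i (h𝒜 i hi)

/-- concentration at the boundary.  If
`∑_{B ∈ R_A} |R_B| μ(A∩B)²/(μ(A)μ(B)) ≤ c` for every atom `A ≠ A₀` of `Σ_a`, then for
every finite family `𝒜 ⊆ Π_a ∖ {A₀}` one has `μ(⋃𝒜) ≤ c · μ(R_𝒜)`, where `R_𝒜` is the
union of all atoms of `Σ_b` meeting some atom of `𝒜` in positive measure. -/
theorem statement18 {Ω : Type*} [MeasurableSpace Ω] (μ : Measure Ω) [SigmaFinite μ]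
    (Pa Pb : AtomicPartition μ) (A0 : Option Pa.ι) (c : ℝ) (hc0 : 0 < c) (hc1 : c < 1)
    (H : ∀ i : Pa.ι, some i ≠ A0 → atomSum μ Pa Pb i ≤ ENNReal.ofReal c) :
    ∀ 𝒜 : Finset Pa.ι, (∀ i ∈ 𝒜, some i ≠ A0) →
      μ (⋃ i ∈ 𝒜, Pa.atom i)
        ≤ ENNReal.ofReal c *
          μ (⋃ i ∈ 𝒜, ⋃ j ∈ {j : Pb.ι | 0 < μ (Pa.atom i ∩ Pb.atom j)}, Pb.atom j) :=
  statement18_general μ Pa Pb A0 c H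
end

section
/- Let α > 0, n ≥ 1, N ≥ 1 an integer, let R ⊆ ℝ^n and S ⊆ ℝ^n be measurable sets, and let a ∈ ℝ^n. Assume S ⊆ ⋃_{j=1}^N (R + j·a) and |x + j·a| ≥ |x| + |a|/2 for every x ∈ R and every j ∈ {1,…,N}. Then ∫_S e^{−|x|^α} dx ≤ N·( sup_{x∈R} e^{|x|^α − (|x| + |a|/2)^α} )·∫_R e^{−|x|^α} dx. -/
/-!
Each translate `R + j·a` carries at most `sup_R e^{|x|^α - (|x|+|a|/2)^α}` times the mass of
`R`: by translation invariance of Lebesgue measure its mass is `∫_R e^{-|x + j·a|^α} dx`, and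
pushing `x` away from the origin by at least `|a|/2` multiplies the density pointwise by at most
that factor. Summing over the `N` translates covering `S` gives the bound.
-/

open MeasureTheory ENNReal

theorem setLIntegral_biUnion_finset_le {α ι : Type*} [MeasurableSpace α] {μ : Measure α}
    (s : Finset ι) (t : ι → Set α) (f : α → ℝ≥0∞) :
    ∫⁻ x in ⋃ i ∈ s, t i, f x ∂μ ≤ ∑ i ∈ s, ∫⁻ x in t i, f x ∂μ := by
  classical
  induction s using Finset.induction_on with
  | empty => simp
  | insert i s hi ih =>
    rw [Finset.set_biUnion_insert, Finset.sum_insert hi]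
    exact (lintegral_union_le _ _ _).trans (add_le_add_right ih _)

section Translates

variable {G : Type*} [AddGroup G] [MeasurableSpace G] [MeasurableAdd G]
  {μ : Measure G} [μ.IsAddRightInvariant] {f : G → ℝ≥0∞} {R : Set G} {c : ℝ≥0∞}

theorem setLIntegral_image_add_right_le (hf : Measurable f) (v : G)
    (hfv : ∀ x ∈ R, f (x + v) ≤ c * f x) :
    ∫⁻ x in (· + v) '' R, f x ∂μ ≤ c * ∫⁻ x in R, f x ∂μ := by
  rw [← (measurePreserving_add_right μ v).setLIntegral_comp_emb
    (MeasurableEquiv.addRight v).measurableEmbedding f R, ← lintegral_const_mul c hf]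
  exact setLIntegral_mono (hf.const_mul c) hfv

theorem setLIntegral_le_card_mul_of_subset_biUnion_image_add_right {ι : Type*}
    (hf : Measurable f) {S : Set G} {s : Finset ι} (v : ι → G)
    (hS : S ⊆ ⋃ i ∈ s, (· + v i) '' R)
    (hfv : ∀ x ∈ R, ∀ i ∈ s, f (x + v i) ≤ c * f x) :
    ∫⁻ x in S, f x ∂μ ≤ s.card * c * ∫⁻ x in R, f x ∂μ :=
  calc ∫⁻ x in S, f x ∂μ
      ≤ ∑ i ∈ s, ∫⁻ x in (· + v i) '' R, f x ∂μ :=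
        (lintegral_mono_set hS).trans (setLIntegral_biUnion_finset_le _ _ _)
    _ ≤ ∑ _i ∈ s, c * ∫⁻ x in R, f x ∂μ :=
        Finset.sum_le_sum fun i hi =>
          setLIntegral_image_add_right_le hf (v i) fun x hx => hfv x hx i hi
    _ = s.card * c * ∫⁻ x in R, f x ∂μ := by rw [Finset.sum_const, nsmul_eq_mul, mul_assoc]

end Translates

theorem Real.exp_neg_rpow_le_exp_sub_mul {α s t : ℝ} (hα : 0 ≤ α) (hs : 0 ≤ s)
    (hst : s ≤ t) (u : ℝ) : Real.exp (-(t ^ α)) ≤ Real.exp (u ^ α - s ^ α) * Real.exp (-(u ^ α)) := by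
  rw [← Real.exp_add]
  exact Real.exp_le_exp.2 (by linarith [Real.rpow_le_rpow hs hst hα])

theorem statement19_general (α : ℝ) (hα : 0 < α) (n : ℕ) (N : ℕ)
    (R S : Set (EuclideanSpace ℝ (Fin n)))
    (a : EuclideanSpace ℝ (Fin n))
    (hcov : S ⊆ ⋃ j ∈ Finset.Icc 1 N, (fun x => x + (j : ℝ) • a) '' R)
    (hfar : ∀ x ∈ R, ∀ j ∈ Finset.Icc 1 N, ‖x‖ + ‖a‖ / 2 ≤ ‖x + (j : ℝ) • a‖) :
    ∫⁻ x in S, ENNReal.ofReal (Real.exp (-(‖x‖ ^ α))) ∂volume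
      ≤ (N : ℝ≥0∞) *
          (⨆ x ∈ R, ENNReal.ofReal (Real.exp (‖x‖ ^ α - (‖x‖ + ‖a‖ / 2) ^ α))) *
          ∫⁻ x in R, ENNReal.ofReal (Real.exp (-(‖x‖ ^ α))) ∂volume := by
  have hdensity : ∀ x ∈ R, ∀ j ∈ Finset.Icc 1 N,
      ENNReal.ofReal (Real.exp (-(‖x + (j : ℝ) • a‖ ^ α)))
        ≤ (⨆ x ∈ R, ENNReal.ofReal (Real.exp (‖x‖ ^ α - (‖x‖ + ‖a‖ / 2) ^ α)))
          * ENNReal.ofReal (Real.exp (-(‖x‖ ^ α))) := fun x hx j hj =>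
    calc _ ≤ ENNReal.ofReal (Real.exp (‖x‖ ^ α - (‖x‖ + ‖a‖ / 2) ^ α))
            * ENNReal.ofReal (Real.exp (-(‖x‖ ^ α))) := by
          rw [← ENNReal.ofReal_mul (Real.exp_nonneg _)]
          exact ENNReal.ofReal_le_ofReal <| Real.exp_neg_rpow_le_exp_sub_mul hα.le
            (by positivity) (hfar x hx j hj) _
      _ ≤ _ := by gcongr; exact le_biSup (fun x => ENNReal.ofReal _) hx
  simpa only [Nat.card_Icc, Nat.add_sub_cancel] using
    setLIntegral_le_card_mul_of_subset_biUnion_image_add_right (μ := volume) (by fun_prop)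
      (fun j : ℕ => (j : ℝ) • a) hcov hdensity

/-- translation-covering estimate for `e^{-|x|^α}dx`.  If
`S ⊆ ⋃_{j=1}^N (R + j·a)` and `|x + j·a| ≥ |x| + |a|/2` for all `x ∈ R`, `1 ≤ j ≤ N`, then
`∫_S e^{-|x|^α} dx ≤ N · (sup_{x∈R} e^{|x|^α - (|x|+|a|/2)^α}) · ∫_R e^{-|x|^α} dx`. -/
theorem statement19 (α : ℝ) (hα : 0 < α) (n : ℕ) (hn : 1 ≤ n) (N : ℕ) (hN : 1 ≤ N)
    (R S : Set (EuclideanSpace ℝ (Fin n))) (hR : MeasurableSet R) (hS : MeasurableSet S)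
    (a : EuclideanSpace ℝ (Fin n))
    (hcov : S ⊆ ⋃ j ∈ Finset.Icc 1 N, (fun x => x + (j : ℝ) • a) '' R)
    (hfar : ∀ x ∈ R, ∀ j ∈ Finset.Icc 1 N, ‖x‖ + ‖a‖ / 2 ≤ ‖x + (j : ℝ) • a‖) :
    ∫⁻ x in S, ENNReal.ofReal (Real.exp (-(‖x‖ ^ α))) ∂volume
      ≤ (N : ℝ≥0∞) *
          (⨆ x ∈ R, ENNReal.ofReal (Real.exp (‖x‖ ^ α - (‖x‖ + ‖a‖ / 2) ^ α))) *
          ∫⁻ x in R, ENNReal.ofReal (Real.exp (-(‖x‖ ^ α))) ∂volume :=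
  statement19_general α hα n N R S a hcov hfar
end
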